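/- (Core of the identifiability of the Normal-Block model with unknown clusters.) Let p > q ≥ 1. Let d, d' : Fin p → ℝ, let Σ, Σ' be symmetric q×q real matrices such that: the diagonal entries of Σ are pairwise distinct; the diagonal entries of Σ' are pairwise distinct; and no off-diagonal entry of Σ' equals a diagonal entry of Σ' (for all k1 and all k2 ≠ k3, Σ'_{k1 k1} ≠ Σ'_{k2 k3}). Suppose φ is a bijection of the set of clusterings (Fin p → Fin q) such that for every clustering a, diag(d) + C_a Σ C_aᵀ = diag(d') + C_{φ(a)} Σ' C_{φ(a)}ᵀ. Then there exists a permutation s of Fin q such that: (i) for every clustering a, φ(a) = s ∘ a; (ii) for all k1, k2 ∈ Fin q, Σ'_{s(k1) s(k2)} = Σ_{k1 k2}; (iii) d' = d. Moreover, if α, α' : Fin q → ℝ are positive and satisfy, for every clustering a, ∏_{j=1}^p α_{a(j)} = ∏_{j=1}^p α'_{φ(a)(j)}, then α'_{s(k)} = α_k for every k. -/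
import Mathlib


open Matrix

/-- The clustering matrix associated with a clustering `a` of `p` variables into
`q` clusters: `C j k = 1` if `a j = k` and `0` otherwise. -/
def clusterMatrix {p q : ℕ} (a : Fin p → Fin q) : Matrix (Fin p) (Fin q) ℝ :=
  Matrix.of fun j k => if a j = k then 1 else 0

lemma cluster_mul {p q : ℕ} (a : Fin p → Fin q) (S : Matrix (Fin q) (Fin q) ℝ)
    (j j' : Fin p) :
    (clusterMatrix a * S * (clusterMatrix a)ᵀ) j j' = S (a j) (a j') := by
  simp [clusterMatrix, Matrix.mul_apply, Matrix.transpose_apply, ite_mul, mul_ite]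

/-- Core of the identifiability of the Normal-Block model with unknown clusters:
matching the mixture components across a bijection of clusterings forces a single
label permutation relating the two parameter sets. -/
theorem stmt7 {p q : ℕ} (hq : 1 ≤ q) (hpq : q < p)
    (d d' : Fin p → ℝ) (Sg Sg' : Matrix (Fin q) (Fin q) ℝ)
    (hSg : Sg.IsSymm) (hSg' : Sg'.IsSymm)
    (hdiag : ∀ k1 k2 : Fin q, k1 ≠ k2 → Sg k1 k1 ≠ Sg k2 k2)
    (hdiag' : ∀ k1 k2 : Fin q, k1 ≠ k2 → Sg' k1 k1 ≠ Sg' k2 k2)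
    (hoff' : ∀ k1 k2 k3 : Fin q, k2 ≠ k3 → Sg' k1 k1 ≠ Sg' k2 k3)
    (φ : (Fin p → Fin q) → (Fin p → Fin q)) (hφ : Function.Bijective φ)
    (h : ∀ a : Fin p → Fin q,
      Matrix.diagonal d + clusterMatrix a * Sg * (clusterMatrix a)ᵀ
        = Matrix.diagonal d' + clusterMatrix (φ a) * Sg' * (clusterMatrix (φ a))ᵀ) :
    ∃ s : Equiv.Perm (Fin q),
      (∀ a : Fin p → Fin q, φ a = s ∘ a) ∧
      (∀ k1 k2 : Fin q, Sg' (s k1) (s k2) = Sg k1 k2) ∧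
      d' = d ∧
      (∀ α α' : Fin q → ℝ, (∀ k, 0 < α k) → (∀ k, 0 < α' k) →
        (∀ a : Fin p → Fin q, ∏ j, α (a j) = ∏ j, α' (φ a j)) →
        ∀ k, α' (s k) = α k) := by
  have hp : 0 < p := by omega
  -- entrywise form of the hypothesis
  have key : ∀ (a : Fin p → Fin q) (j j' : Fin p),
      Matrix.diagonal d j j' + Sg (a j) (a j')
        = Matrix.diagonal d' j j' + Sg' (φ a j) (φ a j') := by
    intro a j j'
    have := congrFun (congrFun (congrArg (fun M => M.1) (congrArg (fun M => (M, 0)) (h a))) j) j'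
    simpa [Matrix.add_apply, cluster_mul] using congrFun (congrFun (h a) j) j'
  have off : ∀ (a : Fin p → Fin q) (j j' : Fin p), j ≠ j' →
      Sg (a j) (a j') = Sg' (φ a j) (φ a j') := by
    intro a j j' hjj
    have := key a j j'
    simpa [Matrix.diagonal_apply_ne _ hjj] using this
  have diagEq : ∀ (a : Fin p → Fin q) (j : Fin p),
      d j + Sg (a j) (a j) = d' j + Sg' (φ a j) (φ a j) := by
    intro a j
    simpa using key a j j
  set j0 : Fin p := ⟨0, hp⟩ with hj0
  set s0 : Fin q → Fin q := fun k => φ (fun _ => k) j0 with hs0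
  -- φ of a constant clustering is constant
  have hconst : ∀ (k : Fin q) (j : Fin p), φ (fun _ => k) j = s0 k := by
    intro k
    set b := φ (fun _ => k) with hb
    obtain ⟨j1, j2, hne, heq⟩ :=
      Fintype.exists_ne_map_eq_of_card_lt b (by simpa using hpq)
    have h1 : Sg k k = Sg' (b j1) (b j2) := off (fun _ => k) j1 j2 hne
    have hdval : Sg' (b j1) (b j1) = Sg k k := by rw [show Sg' (b j1) (b j1) = Sg' (b j1) (b j2) from by rw [heq]]; exact h1.symm
    have hbc : ∀ j j' : Fin p, b j = b j' := by
      intro j j'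
      by_contra hbb
      have hjj : j ≠ j' := by rintro rfl; exact hbb rfl
      have h1 : Sg k k = Sg' (b j) (b j') := off (fun _ => k) j j' hjj
      exact hoff' (b j1) (b j) (b j') hbb (hdval.trans h1)
    intro j; exact hbc j j0
  have hSgdiag : ∀ k : Fin q, Sg' (s0 k) (s0 k) = Sg k k := by
    intro k
    obtain ⟨j1, j2, hne, -⟩ :=
      Fintype.exists_ne_map_eq_of_card_lt (φ (fun _ => k)) (by simpa using hpq)
    have := off (fun _ => k) j1 j2 hne
    rw [hconst k j1, hconst k j2] at this
    exact this.symm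
  -- d' = d
  set k0 : Fin q := ⟨0, hq⟩ with hk0
  have hd : d' = d := by
    funext j
    have := diagEq (fun _ => k0) j
    rw [hconst k0 j, hSgdiag k0] at this
    linarith
  -- φ a = s0 ∘ a
  have hmain : ∀ (a : Fin p → Fin q) (j : Fin p), φ a j = s0 (a j) := by
    intro a j
    have h1 := diagEq a j
    rw [hd] at h1
    have h2 : Sg' (φ a j) (φ a j) = Sg' (s0 (a j)) (s0 (a j)) := by
      rw [hSgdiag]; linarith
    by_contra hne
    exact hdiag' (φ a j) (s0 (a j)) hne h2
  -- s0 injective, hence a permutation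
  have hinj : Function.Injective s0 := by
    intro k1 k2 hk
    by_contra hne
    apply hdiag k1 k2 hne
    rw [← hSgdiag k1, ← hSgdiag k2, hk]
  let s : Equiv.Perm (Fin q) := Equiv.ofBijective s0 (Finite.injective_iff_bijective.mp hinj)
  have hsapp : ∀ k, s k = s0 k := fun k => rfl
  refine ⟨s, ?_, ?_, hd, ?_⟩
  · intro a; funext j; simp [Function.comp, hsapp, hmain a j]
  · -- relation between Sg' and Sg
    intro k1 k2
    have hp2 : 1 < p := by omega
    set j1 : Fin p := ⟨0, hp⟩ with hj1
    set j2 : Fin p := ⟨1, hp2⟩ with hj2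
    have hne : j1 ≠ j2 := by simp [hj1, hj2, Fin.ext_iff]
    set a : Fin p → Fin q := fun j => if j = j1 then k1 else k2 with ha
    have h1 := off a j1 j2 hne
    rw [hmain a j1, hmain a j2] at h1
    have e1 : a j1 = k1 := by simp [ha]
    have e2 : a j2 = k2 := by simp [ha, hne.symm]
    rw [e1, e2] at h1
    rw [hsapp, hsapp]
    exact h1.symm
  · intro α α' hα hα' hprod k
    have h1 := hprod (fun _ => k)
    have h2 : ∏ j : Fin p, α' (φ (fun _ => k) j) = ∏ j : Fin p, α' (s0 k) :=
      Finset.prod_congr rfl (fun j _ => by rw [hconst k j])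
    rw [h2, Finset.prod_const, Finset.prod_const] at h1
    simp only [Finset.card_univ, Fintype.card_fin] at h1
    have := (pow_left_strictMonoOn₀ (n := p) hp.ne').injOn
      (hα k).le (hα' (s0 k)).le h1
    rw [hsapp]
    exact this.symm
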